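/- Let A, B ∈ ℂ^{m×n}, Δ = A⊗B − B⊗A, and let V^n = [S_D^n; √2 S_L^n]H^n ∈ ℝ^{(n(n+1)/2)×n²} and U^m = −√2 S_U^m F^m ∈ ℝ^{(m(m−1)/2)×m²} be the symmetric and skew-symmetric compression blocks of T^m, T^n. Then V^m Δ (V^n)ᵀ = 0 and U^m Δ (U^n)ᵀ = 0, i.e., conjugating Δ by the orthogonal matrices T^m, T^n yields a block anti-diagonal matrix. -/
import Mathlib


open Matrix Kronecker

/-- The commutation matrix `K^n` (over ℂ). -/
def commMat (n : ℕ) : Matrix (Fin n × Fin n) (Fin n × Fin n) ℂ :=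
  fun p q => if q = (p.2, p.1) then 1 else 0

/-- The symmetric projection `H^n = (1/2)(I + K^n)`. -/
noncomputable def symProj (n : ℕ) : Matrix (Fin n × Fin n) (Fin n × Fin n) ℂ :=
  (2 : ℂ)⁻¹ • (1 + commMat n)

/-- The skew-symmetric projection `F^n = (1/2)(I − K^n)`. -/
noncomputable def skewProj (n : ℕ) : Matrix (Fin n × Fin n) (Fin n × Fin n) ℂ :=
  (2 : ℂ)⁻¹ • (1 - commMat n)

/-- Index set for strictly lower triangular positions (cardinality `n(n-1)/2`). -/
def LowIdx (n : ℕ) := {p : Fin n × Fin n // p.1 < p.2}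

instance (n : ℕ) : Fintype (LowIdx n) := by unfold LowIdx; infer_instance
instance (n : ℕ) : DecidableEq (LowIdx n) := by unfold LowIdx; infer_instance

/-- The diagonal selection matrix `S_D^n`. -/
def selD (n : ℕ) : Matrix (Fin n) (Fin n × Fin n) ℂ :=
  fun i q => if q = (i, i) then 1 else 0

/-- The strictly-lower-triangular selection matrix `S_L^n`. -/
def selL (n : ℕ) : Matrix (LowIdx n) (Fin n × Fin n) ℂ :=
  fun k q => if q = k.val then 1 else 0

/-- The strictly-upper-triangular selection matrix `S_U^n`. -/
def selU (n : ℕ) : Matrix (LowIdx n) (Fin n × Fin n) ℂ :=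
  fun k q => if q = (k.val.2, k.val.1) then 1 else 0

/-- The symmetric compression block `V^n = [S_D; √2 S_L] H^n`,
with `n(n+1)/2` rows. -/
noncomputable def Vblock (n : ℕ) :
    Matrix (Fin n ⊕ LowIdx n) (Fin n × Fin n) ℂ :=
  fromRows (selD n) ((Real.sqrt 2 : ℂ) • selL n) * symProj n

/-- The skew-symmetric compression block `U^m = −√2 S_U^m F^m`,
with `m(m-1)/2` rows. -/
noncomputable def Ublock (m : ℕ) :
    Matrix (LowIdx m) (Fin m × Fin m) ℂ :=
  (-(Real.sqrt 2 : ℂ)) • (selU m * skewProj m)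

lemma commMat_mul_apply {n : ℕ} {β : Type*} [Fintype β]
    (M : Matrix (Fin n × Fin n) β ℂ) (p : Fin n × Fin n) (q : β) :
    (commMat n * M) p q = M (p.2, p.1) q := by
  simp [Matrix.mul_apply, commMat]

lemma mul_commMat_apply {n : ℕ} {β : Type*} [Fintype β]
    (M : Matrix β (Fin n × Fin n) ℂ) (p : β) (q : Fin n × Fin n) :
    (M * commMat n) p q = M p (q.2, q.1) := by
  simp [Matrix.mul_apply, commMat, Prod.ext_iff]
  rw [Finset.sum_eq_single (q.2, q.1)] <;> aesop

lemma commMat_transpose (n : ℕ) : (commMat n)ᵀ = commMat n := by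
  ext p q
  simp only [transpose_apply, commMat]
  congr 1
  simp only [eq_iff_iff, Prod.ext_iff]
  constructor <;> (rintro ⟨h1, h2⟩; exact ⟨h2.symm, h1.symm⟩)

lemma commMat_sq (n : ℕ) : commMat n * commMat n = 1 := by
  ext p q
  rw [commMat_mul_apply]
  simp [commMat, one_apply, Prod.ext_iff, eq_comm, and_comm]

lemma commMat_kron {m n : ℕ} (A B : Matrix (Fin m) (Fin n) ℂ) :
    commMat m * (A ⊗ₖ B) = (B ⊗ₖ A) * commMat n := by
  ext p q
  rw [commMat_mul_apply, mul_commMat_apply]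
  simp [kroneckerMap_apply, mul_comm]

lemma symProj_transpose (n : ℕ) : (symProj n)ᵀ = symProj n := by
  simp [symProj, transpose_smul, transpose_add, commMat_transpose]

lemma skewProj_transpose (n : ℕ) : (skewProj n)ᵀ = skewProj n := by
  simp [skewProj, transpose_smul, transpose_sub, commMat_transpose]

lemma skew_mul_sym (n : ℕ) : skewProj n * symProj n = 0 := by
  have h : (1 - commMat n) * (1 + commMat n) = 0 := by
    simp only [Matrix.sub_mul, Matrix.mul_add, Matrix.one_mul, Matrix.mul_one, commMat_sq]
    abel
  rw [skewProj, symProj, Matrix.smul_mul, Matrix.mul_smul, h, smul_zero, smul_zero]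

lemma sym_mul_skew (n : ℕ) : symProj n * skewProj n = 0 := by
  have h : (1 + commMat n) * (1 - commMat n) = 0 := by
    simp only [Matrix.add_mul, Matrix.mul_sub, Matrix.one_mul, Matrix.mul_one, commMat_sq]
    abel
  rw [skewProj, symProj, Matrix.smul_mul, Matrix.mul_smul, h, smul_zero, smul_zero]

lemma symProj_delta {m n : ℕ} (A B : Matrix (Fin m) (Fin n) ℂ) :
    symProj m * (A ⊗ₖ B - B ⊗ₖ A) = (A ⊗ₖ B - B ⊗ₖ A) * skewProj n := by
  simp only [symProj, skewProj, Matrix.smul_mul, Matrix.mul_smul]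
  congr 1
  simp only [Matrix.add_mul, Matrix.mul_sub, Matrix.one_mul, Matrix.mul_one,
    Matrix.mul_sub, Matrix.sub_mul, commMat_kron A B, commMat_kron B A]
  abel

lemma skewProj_delta {m n : ℕ} (A B : Matrix (Fin m) (Fin n) ℂ) :
    skewProj m * (A ⊗ₖ B - B ⊗ₖ A) = (A ⊗ₖ B - B ⊗ₖ A) * symProj n := by
  simp only [symProj, skewProj, Matrix.smul_mul, Matrix.mul_smul]
  congr 1
  simp only [Matrix.add_mul, Matrix.mul_add, Matrix.one_mul, Matrix.mul_one,
    Matrix.mul_sub, Matrix.sub_mul, commMat_kron A B, commMat_kron B A]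
  abel

lemma sym_delta_sym {m n : ℕ} (A B : Matrix (Fin m) (Fin n) ℂ) :
    symProj m * (A ⊗ₖ B - B ⊗ₖ A) * symProj n = 0 := by
  rw [symProj_delta, Matrix.mul_assoc, skew_mul_sym, Matrix.mul_zero]

lemma skew_delta_skew {m n : ℕ} (A B : Matrix (Fin m) (Fin n) ℂ) :
    skewProj m * (A ⊗ₖ B - B ⊗ₖ A) * skewProj n = 0 := by
  rw [skewProj_delta, Matrix.mul_assoc, sym_mul_skew, Matrix.mul_zero]

theorem stmt_18 {m n : ℕ} (A B : Matrix (Fin m) (Fin n) ℂ) :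
    Vblock m * (A ⊗ₖ B - B ⊗ₖ A) * (Vblock n)ᵀ = 0 ∧
    Ublock m * (A ⊗ₖ B - B ⊗ₖ A) * (Ublock n)ᵀ = 0 := by
  set Δ := A ⊗ₖ B - B ⊗ₖ A with hΔ
  constructor
  · unfold Vblock
    rw [Matrix.transpose_mul, symProj_transpose]
    calc fromRows (selD m) ((Real.sqrt 2 : ℂ) • selL m) * symProj m * Δ *
          (symProj n * (fromRows (selD n) ((Real.sqrt 2 : ℂ) • selL n))ᵀ)
        = fromRows (selD m) ((Real.sqrt 2 : ℂ) • selL m) *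
            (symProj m * Δ * symProj n) *
            (fromRows (selD n) ((Real.sqrt 2 : ℂ) • selL n))ᵀ := by
          simp only [Matrix.mul_assoc]
      _ = 0 := by rw [sym_delta_sym]; simp
  · unfold Ublock
    rw [Matrix.transpose_smul, Matrix.transpose_mul, skewProj_transpose]
    have h : selU m * skewProj m * Δ * (skewProj n * (selU n)ᵀ) = 0 := by
      calc selU m * skewProj m * Δ * (skewProj n * (selU n)ᵀ)
          = selU m * (skewProj m * Δ * skewProj n) * (selU n)ᵀ := by
            simp only [Matrix.mul_assoc]
        _ = 0 := by rw [skew_delta_skew]; simp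
    simp only [Matrix.smul_mul, Matrix.mul_smul, h, smul_zero]
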